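/- arXiv:2012.06783 — 2 statements merged into one kernel-verified Lean document; each statement's English description precedes it below -/
import Mathlib

section
/- Let 1 ≤ q < p < ∞. Let X be a real Banach space with an unconditional basis (e_n)_{n∈ℕ} satisfying a lower q-estimate and Y a real Banach space with an unconditional basis (y_n)_{n∈ℕ} satisfying an upper q-estimate. Then the product X × Y (with the sup norm) contains an isomorphic copy of ℓ_p if and only if Y contains an isomorphic copy of ℓ_p. -/
open scoped BigOperators

/-- `e` is a Schauder basis of `X`: every vector has a unique expansion as a norm-convergent
series `∑ n, a n • e n` (partial sums over `Finset.range N`). -/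
def IsSchauderBasis {X : Type*} [NormedAddCommGroup X] [NormedSpace ℝ X] (e : ℕ → X) : Prop :=
  ∀ x : X, ∃! a : ℕ → ℝ,
    Filter.Tendsto (fun N => ∑ n ∈ Finset.range N, a n • e n) Filter.atTop (nhds x)

/-- `u` is a block basic sequence with respect to `e`. -/
def IsBlockBasic {X : Type*} [NormedAddCommGroup X] [NormedSpace ℝ X]
    (e : ℕ → X) (u : ℕ → X) : Prop :=
  ∃ (A : ℕ → Finset ℕ) (a : ℕ → ℝ),
    (∀ j, (A j).Nonempty) ∧
    (∀ j, ∀ m ∈ A j, ∀ k ∈ A (j + 1), m < k) ∧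
    (∀ j, u j = ∑ n ∈ A j, a n • e n)

/-- A sequence is semi-normalized if its norms are bounded away from zero and from infinity. -/
def SemiNormalized {X : Type*} [NormedAddCommGroup X] (u : ℕ → X) : Prop :=
  ∃ c C : ℝ, 0 < c ∧ ∀ j, c ≤ ‖u j‖ ∧ ‖u j‖ ≤ C

/-- Two sequences (possibly in different spaces) are equivalent. -/
def SeqEquiv {X Y : Type*} [NormedAddCommGroup X] [NormedSpace ℝ X]
    [NormedAddCommGroup Y] [NormedSpace ℝ Y] (u : ℕ → X) (w : ℕ → Y) : Prop :=
  ∃ C : ℝ, 1 ≤ C ∧ ∀ (a : ℕ → ℝ) (s : Finset ℕ),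
    C⁻¹ * ‖∑ j ∈ s, a j • w j‖ ≤ ‖∑ j ∈ s, a j • u j‖ ∧
    ‖∑ j ∈ s, a j • u j‖ ≤ C * ‖∑ j ∈ s, a j • w j‖

/-- A bounded linear operator is compact if the image of the closed unit ball is
relatively compact. -/
def CompactOp {X Y : Type*} [NormedAddCommGroup X] [NormedSpace ℝ X]
    [NormedAddCommGroup Y] [NormedSpace ℝ Y] (T : Y →L[ℝ] X) : Prop :=
  IsCompact (closure (T '' Metric.closedBall 0 1))

/-- `e` is an unconditional basis of `X`. -/
def IsUncondBasis {X : Type*} [NormedAddCommGroup X] [NormedSpace ℝ X] (e : ℕ → X) : Prop :=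
  (∀ n, e n ≠ 0) ∧ ∀ x : X, ∃! a : ℕ → ℝ, HasSum (fun n => a n • e n) x

/-- `u` is disjointly finitely supported with respect to `e`. -/
def DisjSupported {X : Type*} [NormedAddCommGroup X] [NormedSpace ℝ X]
    (e : ℕ → X) (u : ℕ → X) : Prop :=
  ∃ A : ℕ → Finset ℕ, Pairwise (Function.onFun Disjoint A) ∧
    ∀ j, u j ∈ Submodule.span ℝ (e '' (A j : Set ℕ))

/-- The basis `e` satisfies a lower `q`-estimate. -/
def LowerEstimate {X : Type*} [NormedAddCommGroup X] [NormedSpace ℝ X]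
    (e : ℕ → X) (q : ℝ) : Prop :=
  ∃ C : ℝ, 0 < C ∧ ∀ (m : ℕ) (f : Fin m → X) (A : Fin m → Finset ℕ),
    Pairwise (Function.onFun Disjoint A) →
    (∀ i, f i ∈ Submodule.span ℝ (e '' (A i : Set ℕ))) →
    (∑ i, ‖f i‖ ^ q) ^ (1 / q) ≤ C * ‖∑ i, f i‖

/-- The basis `e` satisfies an upper `q`-estimate. -/
def UpperEstimate {X : Type*} [NormedAddCommGroup X] [NormedSpace ℝ X]
    (e : ℕ → X) (q : ℝ) : Prop :=
  ∃ C : ℝ, 0 < C ∧ ∀ (m : ℕ) (f : Fin m → X) (A : Fin m → Finset ℕ),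
    Pairwise (Function.onFun Disjoint A) →
    (∀ i, f i ∈ Submodule.span ℝ (e '' (A i : Set ℕ))) →
    ‖∑ i, f i‖ ≤ C * (∑ i, ‖f i‖ ^ q) ^ (1 / q)

/-- `u` is equivalent to the canonical basis of `ℓ_q`. -/
def EquivCanonLq {X : Type*} [NormedAddCommGroup X] [NormedSpace ℝ X]
    (u : ℕ → X) (q : ℝ) : Prop :=
  ∃ C : ℝ, 1 ≤ C ∧ ∀ (a : ℕ → ℝ) (s : Finset ℕ),
    C⁻¹ * (∑ j ∈ s, |a j| ^ q) ^ (1 / q) ≤ ‖∑ j ∈ s, a j • u j‖ ∧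
    ‖∑ j ∈ s, a j • u j‖ ≤ C * (∑ j ∈ s, |a j| ^ q) ^ (1 / q)

/-- `Z` contains an isomorphic copy of `ℓ_q`: there is a bounded linear map `J : ℓ_q → Z`
which is bounded below. -/
def ContainsLp (Z : Type*) [NormedAddCommGroup Z] [NormedSpace ℝ Z] (q : ℝ) : Prop :=
  ∃ (J : lp (fun _ : ℕ => ℝ) (ENNReal.ofReal q) →ₗ[ℝ] Z) (C c : ℝ), 0 < c ∧
    ∀ f, ‖J f‖ ≤ C * ‖f‖ ∧ c * ‖f‖ ≤ ‖J f‖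

/-- `T` is strictly singular: it is bounded below on no infinite-dimensional subspace. -/
def StrictlySingular {X Y : Type*} [NormedAddCommGroup X] [NormedSpace ℝ X]
    [NormedAddCommGroup Y] [NormedSpace ℝ Y] (T : Y →L[ℝ] X) : Prop :=
  ∀ (Z : Submodule ℝ Y) (c : ℝ), 0 < c → (∀ z ∈ Z, c * ‖z‖ ≤ ‖T z‖) →
    FiniteDimensional ℝ Z

/-- A finite family of Banach spaces is splitting for unconditional bases. -/
def SplittingFamily {ι : Type*} [Fintype ι] (Z : ι → Type*)
    [∀ i, NormedAddCommGroup (Z i)] [∀ i, NormedSpace ℝ (Z i)] : Prop :=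
  ∀ w : ℕ → (∀ i, Z i), IsUncondBasis w →
    ∃ N : ι → Set ℕ, Pairwise (Function.onFun Disjoint N) ∧ (⋃ i, N i) = Set.univ ∧
      ∀ i, Nonempty ((Submodule.span ℝ (w '' N i)).topologicalClosure ≃L[ℝ] Z i)

/-- A pair of Banach spaces is splitting for unconditional bases. -/
def SplittingPair (U V : Type*) [NormedAddCommGroup U] [NormedSpace ℝ U]
    [NormedAddCommGroup V] [NormedSpace ℝ V] : Prop :=
  ∀ w : ℕ → U × V, IsUncondBasis w →
    ∃ N₁ N₂ : Set ℕ, Disjoint N₁ N₂ ∧ N₁ ∪ N₂ = Set.univ ∧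
      Nonempty ((Submodule.span ℝ (w '' N₁)).topologicalClosure ≃L[ℝ] U) ∧
      Nonempty ((Submodule.span ℝ (w '' N₂)).topologicalClosure ≃L[ℝ] V)

/-- `U` has a unique, up to equivalence and permutation, unconditional basis. -/
def HasUTAPBasis (U : Type*) [NormedAddCommGroup U] [NormedSpace ℝ U] : Prop :=
  ∃ e : ℕ → U, IsUncondBasis e ∧ SemiNormalized e ∧
    ∀ f : ℕ → U, IsUncondBasis f → SemiNormalized f →
      ∃ π : Equiv.Perm ℕ, SeqEquiv (fun n => f (π n)) e

/-- `y` is a subsymmetric basic sequence: semi-normalized, an unconditional basis of its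
closed linear span, and equivalent to all of its subsequences. -/
def IsSubsymmetric {X : Type*} [NormedAddCommGroup X] [NormedSpace ℝ X] (y : ℕ → X) : Prop :=
  SemiNormalized y ∧ (∀ n, y n ≠ 0) ∧
  (∀ x : X, x ∈ (Submodule.span ℝ (Set.range y)).topologicalClosure →
    ∃! a : ℕ → ℝ, HasSum (fun n => a n • y n) x) ∧
  ∀ k : ℕ → ℕ, StrictMono k → SeqEquiv (fun n => y (k n)) y

/-!
Let `J : ℓ_p → X × Y` be bounded and bounded below. Applying the lower `q`-estimate to the
two disjoint pieces `{j}` and `[0, k) \ {j}` of a partial sum shows that every coordinate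
functional of the basis `e` is bounded, so the coordinates of `T δ_n` tend to zero for every
operator `T : ℓ_p → X` (the unit vectors `δ_n` of `ℓ_p` are weakly null since `p > 1`). If
`‖T δ_n‖` did not tend to zero, a gliding hump would turn a subsequence into disjoint blocks
`v_t` of norm `≳ 1` with `m ^ (1/q) ≲ ‖∑_{t<m} v_t‖ ≲ ‖∑_{t<m} T δ_{n_t}‖ ≲ m ^ (1/p)`, which is
absurd for `q < p`. So the `X`-component of `J` is summably small along a subsequence
`δ_{σ t}`, and on the isometric copy of `ℓ_p` that these vectors span, the `Y`-component of `J`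
is bounded below.
-/

open Filter Topology

theorem not_forall_mul_rpow_le {a b c r s : ℝ} (ha : 0 < a) (hr : 0 ≤ r) (hrs : r < s) :
    ¬ ∀ m : ℕ, a * (m : ℝ) ^ s ≤ b * (m : ℝ) ^ r + c := by
  intro h
  have hgrow : Tendsto (fun m : ℕ => a * (m : ℝ) ^ (s - r)) atTop atTop :=
    ((tendsto_rpow_atTop (sub_pos.2 hrs)).comp tendsto_natCast_atTop_atTop).const_mul_atTop ha
  obtain ⟨m, hm, hm1⟩ :=
    ((hgrow.eventually_gt_atTop (|b| + |c|)).and (eventually_ge_atTop 1)).exists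
  have hm0 : (0 : ℝ) < m := by exact_mod_cast hm1
  have hmr : 1 ≤ (m : ℝ) ^ r := Real.one_le_rpow (by exact_mod_cast hm1) hr
  have hsplit : (m : ℝ) ^ s = (m : ℝ) ^ (s - r) * (m : ℝ) ^ r := by
    rw [← Real.rpow_add hm0, sub_add_cancel]
  have hm' := h m
  rw [hsplit] at hm'
  nlinarith [le_abs_self b, le_abs_self c, abs_nonneg c]

theorem tendsto_zero_of_sum_abs_le_card_rpow {b : ℕ → ℝ} {K p : ℝ} (hp : 1 < p)
    (h : ∀ s : Finset ℕ, ∑ n ∈ s, |b n| ≤ K * (s.card : ℝ) ^ (1 / p)) :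
    Tendsto b atTop (𝓝 0) := by
  rw [Metric.tendsto_atTop]
  by_contra! hfreq
  obtain ⟨d, hd, hfreq⟩ := hfreq
  have hinf : {n | d ≤ |b n|}.Infinite := by
    rw [← Nat.frequently_atTop_iff_infinite, frequently_atTop]
    simpa [Real.dist_eq] using hfreq
  refine not_forall_mul_rpow_le (b := K) (c := 0) hd (by positivity)
    ((div_lt_one (by linarith)).2 hp) fun m => ?_
  obtain ⟨t, hts, rfl⟩ := hinf.exists_subset_card_eq m
  calc d * (t.card : ℝ) ^ (1 : ℝ) = ∑ _n ∈ t, d := by simp [mul_comm]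
    _ ≤ ∑ n ∈ t, |b n| := Finset.sum_le_sum fun n hn => hts hn
    _ ≤ K * (t.card : ℝ) ^ (1 / p) + 0 := by simpa using h t

namespace lp

section single

variable {p : ENNReal}

theorem norm_sum_single_le_card_rpow {α : Type*} {E : α → Type*}
    [∀ i, NormedAddCommGroup (E i)] [DecidableEq α] (hp : 0 < p.toReal) (f : ∀ i, E i)
    (s : Finset α) (hf : ∀ i ∈ s, ‖f i‖ ≤ 1) :
    ‖∑ i ∈ s, lp.single p i (f i)‖ ≤ (s.card : ℝ) ^ (1 / p.toReal) := by
  set z := ∑ i ∈ s, lp.single p i (f i)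
  have hz : ‖z‖ ^ p.toReal ≤ s.card := by
    rw [lp.norm_sum_single hp]
    calc ∑ i ∈ s, ‖f i‖ ^ p.toReal ≤ ∑ _i ∈ s, (1 : ℝ) :=
          Finset.sum_le_sum fun i hi => Real.rpow_le_one (norm_nonneg _) (hf i hi) hp.le
      _ = s.card := by simp
  calc ‖z‖ = (‖z‖ ^ p.toReal) ^ (1 / p.toReal) := by
        rw [one_div, Real.rpow_rpow_inv (lp.norm_nonneg' z) hp.ne']
    _ ≤ (s.card : ℝ) ^ (1 / p.toReal) := by
        gcongr
        exact Real.rpow_nonneg (lp.norm_nonneg' z) _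

theorem norm_sum_range_single_one_le (hp : 0 < p.toReal) {k : ℕ → ℕ} (hk : k.Injective)
    (m : ℕ) :
    ‖(∑ t ∈ Finset.range m, lp.single p (k t) 1 : lp (fun _ : ℕ => ℝ) p)‖ ≤
      (m : ℝ) ^ (1 / p.toReal) := by
  have h := norm_sum_single_le_card_rpow hp (fun _ : ℕ => (1 : ℝ)) ((Finset.range m).image k)
    (by simp)
  rwa [Finset.sum_image hk.injOn, Finset.card_image_of_injective _ hk, Finset.card_range] at h

theorem tendsto_apply_single_one [Fact (1 ≤ p)] (hp : 1 < p.toReal)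
    (φ : lp (fun _ : ℕ => ℝ) p →L[ℝ] ℝ) :
    Tendsto (fun n => φ (lp.single p n 1)) atTop (𝓝 0) := by
  refine tendsto_zero_of_sum_abs_le_card_rpow (K := ‖φ‖) hp fun s => ?_
  set r : ℕ → ℝ := fun n => SignType.sign (φ (lp.single p n 1))
  have hr : ∀ n ∈ s, ‖r n‖ ≤ 1 := fun n _ => by
    rcases lt_trichotomy (φ (lp.single p n 1)) 0 with h | h | h <;> simp [r, h]
  calc ∑ n ∈ s, |φ (lp.single p n 1)| = φ (∑ n ∈ s, lp.single p n (r n)) := by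
        rw [map_sum]
        refine Finset.sum_congr rfl fun n _ => ?_
        rw [← mul_one (r n), ← smul_eq_mul, lp.single_smul, map_smul, smul_eq_mul, sign_mul_self]
    _ ≤ ‖φ‖ * ‖∑ n ∈ s, lp.single p n (r n)‖ := (le_abs_self _).trans (φ.le_opNorm _)
    _ ≤ ‖φ‖ * (s.card : ℝ) ^ (1 / p.toReal) := by
        gcongr
        exact norm_sum_single_le_card_rpow (by linarith) r s hr

end single

section extendZero

variable {p : ENNReal} {α β E : Type*} [NormedAddCommGroup E] {σ : β → α}

theorem norm_rpow_extend_zero (hp : 0 < p.toReal) (hσ : σ.Injective) (f : β → E) (i : α) :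
    ‖Function.extend σ f 0 i‖ ^ p.toReal =
      Function.extend σ (fun j => ‖f j‖ ^ p.toReal) 0 i := by
  by_cases hi : ∃ j, σ j = i
  · obtain ⟨j, rfl⟩ := hi
    simp only [hσ.extend_apply]
  · simp [Function.extend_apply' _ _ _ hi, Real.zero_rpow hp.ne']

theorem memℓp_extend_zero (hp : 0 < p.toReal) (hσ : σ.Injective) {f : β → E}
    (hf : Memℓp f p) : Memℓp (Function.extend σ f 0) p := by
  rw [memℓp_gen_iff hp] at hf ⊢
  simpa only [norm_rpow_extend_zero hp hσ] using (summable_extend_zero hσ).2 hf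

variable [Fact (1 ≤ p)] [NormedSpace ℝ E]

noncomputable def extendZero (hp : 0 < p.toReal) (hσ : σ.Injective) :
    lp (fun _ : β => E) p →ₗᵢ[ℝ] lp (fun _ : α => E) p where
  toFun f := ⟨Function.extend σ f 0, memℓp_extend_zero hp hσ f.2⟩
  map_add' f g := by
    ext1
    simp only [lp.coeFn_add]
    simpa using Function.extend_add σ f g 0 0
  map_smul' c f := by
    ext1
    simp only [lp.coeFn_smul]
    simpa using Function.extend_smul c σ f 0
  norm_map' f := by
    refine Real.rpow_left_injOn hp.ne' (lp.norm_nonneg' _) (lp.norm_nonneg' f) ?_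
    dsimp only
    rw [lp.norm_rpow_eq_tsum hp, lp.norm_rpow_eq_tsum hp]
    change ∑' i, ‖Function.extend σ f 0 i‖ ^ p.toReal = _
    simp only [norm_rpow_extend_zero hp hσ]
    exact tsum_extend_zero hσ _

theorem hasSum_single_extendZero [DecidableEq α] (hp : 0 < p.toReal) (hσ : σ.Injective)
    (f : lp (fun _ : β => E) p) :
    HasSum (fun j => lp.single p (σ j) (f j)) (extendZero hp hσ f) := by
  have hS : ∀ i, extendZero hp hσ f i = Function.extend σ f 0 i := fun _ => rfl
  have key := lp.hasSum_single (ENNReal.toReal_pos_iff.1 hp).2.ne (extendZero hp hσ f)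
  rw [← hσ.hasSum_iff fun i hi => by
    rw [hS, Function.extend_apply' _ _ _ hi]; exact lp.single_zero p i] at key
  simpa [Function.comp_def, hS, hσ.extend_apply] using key

theorem exists_norm_apply_extendZero_le (hp : 0 < p.toReal)
    (T : lp (fun _ : ℕ => ℝ) p →L[ℝ] E)
    (hT : Tendsto (fun n => T (lp.single p n 1)) atTop (𝓝 0)) {ε : ℝ} (hε : 0 < ε) :
    ∃ (σ : ℕ → ℕ) (hσ : σ.Injective), ∀ a, ‖T (extendZero hp hσ a)‖ ≤ ε * ‖a‖ := by
  obtain ⟨σ, hσ, hsmall⟩ := extraction_forall_of_eventually fun t =>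
    NormedAddGroup.tendsto_nhds_zero.1 hT (ε / 2 / 2 ^ t) (by positivity)
  refine ⟨σ, hσ.injective, fun a => ?_⟩
  refine ((hasSum_single_extendZero hp hσ.injective a).mapL T).norm_le_of_bounded
    ((hasSum_geometric_two' ε).mul_right ‖a‖) fun t => ?_
  rw [← mul_one (a t), ← smul_eq_mul, lp.single_smul, map_smul, norm_smul, mul_comm]
  exact mul_le_mul (hsmall t).le (lp.norm_apply_le_norm (zero_lt_one.trans_le Fact.out).ne' a t)
    (norm_nonneg _) (by positivity)

end extendZero

end lp

namespace IsUncondBasis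

variable {X : Type*} [NormedAddCommGroup X] [NormedSpace ℝ X] {e : ℕ → X}

noncomputable def coeff (he : IsUncondBasis e) : X →ₗ[ℝ] ℕ → ℝ where
  toFun x := (he.2 x).exists.choose
  map_add' x y := (he.2 (x + y)).unique (he.2 (x + y)).exists.choose_spec
    (by simpa [add_smul] using (he.2 x).exists.choose_spec.add (he.2 y).exists.choose_spec)
  map_smul' c x := (he.2 (c • x)).unique (he.2 (c • x)).exists.choose_spec
    (by simpa [smul_smul] using (he.2 x).exists.choose_spec.const_smul c)

theorem hasSum_coeff (he : IsUncondBasis e) (x : X) : HasSum (fun n => he.coeff x n • e n) x :=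
  (he.2 x).exists.choose_spec

theorem exists_block (he : IsUncondBasis e) {x : ℕ → X}
    (hx : ∀ j, Tendsto (fun n => he.coeff (x n) j) atTop (𝓝 0)) (N lo : ℕ) {ε : ℝ}
    (hε : 0 < ε) :
    ∃ n hi, N < n ∧ lo ≤ hi ∧
      ‖x n - ∑ k ∈ Finset.Ico lo hi, he.coeff (x n) k • e k‖ ≤ ε := by
  have hhead : Tendsto (fun n => ∑ k ∈ Finset.range lo, he.coeff (x n) k • e k) atTop (𝓝 0) := by
    simpa using tendsto_finsetSum _ fun k _ => (hx k).smul_const (e k)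
  obtain ⟨n, hn, hNn⟩ :=
    ((NormedAddGroup.tendsto_nhds_zero.1 hhead _ (half_pos hε)).and (eventually_gt_atTop N)).exists
  have htail : Tendsto (fun hi => x n - ∑ k ∈ Finset.range hi, he.coeff (x n) k • e k) atTop
      (𝓝 0) := by
    simpa using (he.hasSum_coeff (x n)).tendsto_sum_nat.const_sub (x n)
  obtain ⟨hi, hhi, hlo⟩ :=
    ((NormedAddGroup.tendsto_nhds_zero.1 htail _ (half_pos hε)).and (eventually_ge_atTop lo)).exists
  refine ⟨n, hi, hNn, hlo, ?_⟩
  rw [Finset.sum_Ico_eq_sub _ hlo, sub_sub_eq_add_sub, add_sub_right_comm]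
  linarith [norm_add_le (x n - ∑ k ∈ Finset.range hi, he.coeff (x n) k • e k)
    (∑ k ∈ Finset.range lo, he.coeff (x n) k • e k)]

theorem exists_blocks (he : IsUncondBasis e) {x : ℕ → X}
    (hx : ∀ j, Tendsto (fun n => he.coeff (x n) j) atTop (𝓝 0)) {η : ℕ → ℝ}
    (hη : ∀ t, 0 < η t) :
    ∃ ν B : ℕ → ℕ, StrictMono ν ∧ Monotone B ∧ ∀ t,
      ‖x (ν t) - ∑ k ∈ Finset.Ico (B t) (B (t + 1)), he.coeff (x (ν t)) k • e k‖ ≤ η t := by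
  choose n hi hn hhi hblock using fun t (a : ℕ × ℕ) => he.exists_block hx a.1 a.2 (hη t)
  let g : ℕ → ℕ × ℕ := fun t => Nat.rec (0, 0) (fun t a => (n t a, hi t a)) t
  exact ⟨fun t => (g (t + 1)).1, fun t => (g t).2,
    strictMono_nat_of_lt_succ fun t => hn (t + 1) (g (t + 1)),
    monotone_nat_of_le_succ fun t => hhi t (g t), fun t => hblock t (g t)⟩

end IsUncondBasis

namespace LowerEstimate

variable {X : Type*} [NormedAddCommGroup X] [NormedSpace ℝ X] {e : ℕ → X} {q : ℝ}

theorem exists_norm_coeff_smul_le (hlow : LowerEstimate e q) (he : IsUncondBasis e)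
    (hq : 0 < q) : ∃ C, ∀ x j, ‖he.coeff x j • e j‖ ≤ C * ‖x‖ := by
  obtain ⟨C, -, hC⟩ := hlow
  refine ⟨C, fun x j => ge_of_tendsto ((he.hasSum_coeff x).tendsto_sum_nat.norm.const_mul C)
    ((eventually_gt_atTop j).mono fun k hk => ?_)⟩
  let A : Fin 2 → Finset ℕ := ![{j}, (Finset.range k).erase j]
  let f : Fin 2 → X := fun i => ∑ n ∈ A i, he.coeff x n • e n
  have hA : Pairwise (Function.onFun Disjoint A) := by
    intro a b hab
    fin_cases a <;> fin_cases b <;> simp_all [A, Function.onFun]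
  have hf : ∀ i, f i ∈ Submodule.span ℝ (e '' (A i : Set ℕ)) := fun i =>
    Submodule.sum_smul_mem _ _ fun n hn => Submodule.subset_span ⟨n, hn, rfl⟩
  have hsum : ∑ i, f i = ∑ n ∈ Finset.range k, he.coeff x n • e n := by
    simpa [Fin.sum_univ_two, f, A] using
      Finset.add_sum_erase _ (fun n => he.coeff x n • e n) (Finset.mem_range.2 hk)
  calc ‖he.coeff x j • e j‖ = (‖f 0‖ ^ q) ^ (1 / q) := by
        rw [one_div, Real.rpow_rpow_inv (norm_nonneg _) hq.ne']; simp [f, A]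
    _ ≤ (∑ i, ‖f i‖ ^ q) ^ (1 / q) := by
        gcongr
        rw [Fin.sum_univ_two]
        exact le_add_of_nonneg_right (by positivity)
    _ ≤ C * ‖∑ n ∈ Finset.range k, he.coeff x n • e n‖ := hsum ▸ hC 2 f A hA hf

theorem tendsto_coeff_apply_single (hlow : LowerEstimate e q) (he : IsUncondBasis e)
    (hq : 0 < q) {p : ENNReal} [Fact (1 ≤ p)] (hp : 1 < p.toReal)
    (T : lp (fun _ : ℕ => ℝ) p →L[ℝ] X) (j : ℕ) :
    Tendsto (fun n => he.coeff (T (lp.single p n 1)) j) atTop (𝓝 0) := by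
  obtain ⟨C, hC⟩ := hlow.exists_norm_coeff_smul_le he hq
  have hej : 0 < ‖e j‖ := norm_pos_iff.2 (he.1 j)
  let φ : X →L[ℝ] ℝ := ((LinearMap.proj j).comp he.coeff).mkContinuous (C / ‖e j‖) fun x => by
    rw [div_mul_eq_mul_div, le_div_iff₀ hej]
    simpa [norm_smul] using hC x j
  exact lp.tendsto_apply_single_one hp (φ.comp T)

theorem exists_mul_rpow_le_norm_sum_blocks (hlow : LowerEstimate e q) (hq : 0 < q) :
    ∃ C, 0 ≤ C ∧ ∀ B : ℕ → ℕ, Monotone B → ∀ v : ℕ → X,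
      (∀ t, v t ∈ Submodule.span ℝ (e '' (Finset.Ico (B t) (B (t + 1)) : Set ℕ))) →
      ∀ a : ℝ, 0 ≤ a → (∀ t, a ≤ ‖v t‖) →
      ∀ m : ℕ, a * (m : ℝ) ^ (1 / q) ≤ C * ‖∑ t ∈ Finset.range m, v t‖ := by
  obtain ⟨C, hC0, hC⟩ := hlow
  refine ⟨C, hC0.le, fun B hB v hv a ha hav m => ?_⟩
  have hdisj : Pairwise (Function.onFun Disjoint fun i : Fin m => Finset.Ico (B i) (B (i + 1))) :=
    fun i j hij => by
      simpa [Function.onFun, ← Finset.disjoint_coe] using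
        hB.pairwise_disjoint_on_Ico_succ (Fin.val_injective.ne hij)
  have hlowm := hC m (fun i => v i) _ hdisj fun i => hv i
  rw [Fin.sum_univ_eq_sum_range (fun t => v t)] at hlowm
  calc a * (m : ℝ) ^ (1 / q) = (∑ _i : Fin m, a ^ q) ^ (1 / q) := by
        rw [Finset.sum_const, Finset.card_univ, Fintype.card_fin, nsmul_eq_mul,
          Real.mul_rpow (by positivity) (by positivity), one_div,
          Real.rpow_rpow_inv ha hq.ne', mul_comm]
    _ ≤ (∑ i : Fin m, ‖v i‖ ^ q) ^ (1 / q) := by gcongr with i; exact hav i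
    _ ≤ C * ‖∑ t ∈ Finset.range m, v t‖ := hlowm

theorem tendsto_apply_single (hlow : LowerEstimate e q) (he : IsUncondBasis e) (hq : 0 < q)
    {p : ENNReal} [Fact (1 ≤ p)] (hqp : q < p.toReal) (hp : 1 < p.toReal)
    (T : lp (fun _ : ℕ => ℝ) p →L[ℝ] X) :
    Tendsto (fun n => T (lp.single p n 1)) atTop (𝓝 0) := by
  by_contra hT
  obtain ⟨ε, hε, hfreq⟩ : ∃ ε > 0, ∃ᶠ n in atTop, ε ≤ ‖T (lp.single p n 1)‖ := by
    simpa [Metric.tendsto_atTop, frequently_atTop, dist_zero_right] using hT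
  obtain ⟨φ, hφ, hεφ⟩ := extraction_of_frequently_atTop hfreq
  let x n := T (lp.single p (φ n) 1)
  have hx j : Tendsto (fun n => he.coeff (x n) j) atTop (𝓝 0) :=
    (hlow.tendsto_coeff_apply_single he hq hp T j).comp hφ.tendsto_atTop
  let η : ℕ → ℝ := fun t => ε / 2 / 2 / 2 ^ t
  have hη : HasSum η (ε / 2) := hasSum_geometric_two' _
  obtain ⟨ν, B, hν, hB, hblock⟩ := he.exists_blocks hx (η := η) fun t => by positivity
  let v t := ∑ k ∈ Finset.Ico (B t) (B (t + 1)), he.coeff (x (ν t)) k • e k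
  have hv t : ε / 2 ≤ ‖v t‖ := by
    linarith [hεφ (ν t), hblock t, le_hasSum hη t fun _ _ => by positivity,
      norm_sub_norm_le (x (ν t)) (v t)]
  have hx_sum m : ‖∑ t ∈ Finset.range m, x (ν t)‖ ≤ ‖T‖ * (m : ℝ) ^ (1 / p.toReal) := by
    simp only [x, ← map_sum]
    refine (T.le_opNorm _).trans ?_
    gcongr
    exact lp.norm_sum_range_single_one_le (by linarith) (hφ.comp hν).injective m
  have hv_sum m : ‖∑ t ∈ Finset.range m, v t‖ ≤ ‖T‖ * (m : ℝ) ^ (1 / p.toReal) + ε / 2 := by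
    have herr : ‖∑ t ∈ Finset.range m, (x (ν t) - v t)‖ ≤ ε / 2 :=
      (norm_sum_le _ _).trans <| (Finset.sum_le_sum fun t _ => hblock t).trans <|
        sum_le_hasSum _ (fun _ _ => by positivity) hη
    rw [← sub_sub_cancel (∑ t ∈ Finset.range m, x (ν t)) (∑ t ∈ Finset.range m, v t),
      ← Finset.sum_sub_distrib]
    exact (norm_sub_le _ _).trans (add_le_add (hx_sum m) herr)
  obtain ⟨C, hC0, hC⟩ := hlow.exists_mul_rpow_le_norm_sum_blocks hq
  have hv_span t : v t ∈ Submodule.span ℝ (e '' (Finset.Ico (B t) (B (t + 1)) : Set ℕ)) :=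
    Submodule.sum_smul_mem _ _ fun k hk => Submodule.subset_span ⟨k, hk, rfl⟩
  refine not_forall_mul_rpow_le (b := C * ‖T‖) (c := C * (ε / 2)) (half_pos hε) (by positivity)
    (one_div_lt_one_div_of_lt hq hqp) fun m => ?_
  calc ε / 2 * (m : ℝ) ^ (1 / q) ≤ C * ‖∑ t ∈ Finset.range m, v t‖ :=
        hC B hB v hv_span _ (half_pos hε).le hv m
    _ ≤ C * (‖T‖ * (m : ℝ) ^ (1 / p.toReal) + ε / 2) := by gcongr; exact hv_sum m
    _ = C * ‖T‖ * (m : ℝ) ^ (1 / p.toReal) + C * (ε / 2) := by ring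

end LowerEstimate

section ContainsLp

variable {X Y : Type*} [NormedAddCommGroup X] [NormedSpace ℝ X] [NormedAddCommGroup Y]
  [NormedSpace ℝ Y] {p : ℝ}

theorem ContainsLp.prod_of_right (h : ContainsLp Y p) : ContainsLp (X × Y) p := by
  obtain ⟨J, C, c, hc, hJ⟩ := h
  exact ⟨(LinearMap.inr ℝ X Y).comp J, C, c, hc, fun f => by simpa [Prod.norm_def] using hJ f⟩

theorem LowerEstimate.containsLp_of_containsLp_prod {e : ℕ → X} {q : ℝ}
    (hlow : LowerEstimate e q) (he : IsUncondBasis e) (hq : 0 < q) (hqp : q < p) (hp : 1 < p)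
    (h : ContainsLp (X × Y) p) : ContainsLp Y p := by
  obtain ⟨J, C, c, hc, hJ⟩ := h
  have hpR : (ENNReal.ofReal p).toReal = p := ENNReal.toReal_ofReal (by linarith)
  have : Fact (1 ≤ ENNReal.ofReal p) := ⟨ENNReal.one_le_ofReal.2 hp.le⟩
  have hp0 : 0 < (ENNReal.ofReal p).toReal := by linarith
  let J' := J.mkContinuous C fun f => (hJ f).1
  obtain ⟨σ, hσ, hsmall⟩ := lp.exists_norm_apply_extendZero_le hp0
    ((ContinuousLinearMap.fst ℝ X Y).comp J')
    (hlow.tendsto_apply_single he hq (by rwa [hpR]) (by rwa [hpR]) _) (half_pos hc)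
  let S := lp.extendZero (E := ℝ) hp0 hσ
  refine ⟨(LinearMap.snd ℝ X Y).comp (J.comp S.toLinearMap), C, c / 2, half_pos hc,
    fun a => ⟨?_, ?_⟩⟩
  · calc ‖(J (S a)).2‖ ≤ ‖J (S a)‖ := norm_snd_le _
      _ ≤ C * ‖a‖ := S.norm_map a ▸ (hJ (S a)).1
  · have hlower : c * ‖a‖ ≤ ‖J (S a)‖ := S.norm_map a ▸ (hJ (S a)).2
    have hfst : ‖(J (S a)).1‖ ≤ c / 2 * ‖a‖ := hsmall a
    rw [Prod.norm_def] at hlower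
    show c / 2 * ‖a‖ ≤ ‖(J (S a)).2‖
    linarith [max_le_add_of_nonneg (norm_nonneg (J (S a)).1) (norm_nonneg (J (S a)).2)]

end ContainsLp

theorem statement12_general {X Y : Type*} [NormedAddCommGroup X] [NormedSpace ℝ X]
    [NormedAddCommGroup Y] [NormedSpace ℝ Y]
    (p q : ℝ) (hq : 1 ≤ q) (hqp : q < p)
    (e : ℕ → X) (he : IsUncondBasis e) (hlow : LowerEstimate e q) :
    ContainsLp (X × Y) p ↔ ContainsLp Y p :=
  ⟨hlow.containsLp_of_containsLp_prod he (by linarith) hqp (by linarith),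
    ContainsLp.prod_of_right⟩

theorem statement12 {X Y : Type*} [NormedAddCommGroup X] [NormedSpace ℝ X] [CompleteSpace X]
    [NormedAddCommGroup Y] [NormedSpace ℝ Y] [CompleteSpace Y]
    (p q : ℝ) (hq : 1 ≤ q) (hqp : q < p)
    (e : ℕ → X) (he : IsUncondBasis e) (hlow : LowerEstimate e q)
    (y : ℕ → Y) (hy : IsUncondBasis y) (hup : UpperEstimate y q) :
    ContainsLp (X × Y) p ↔ ContainsLp Y p :=
  statement12_general p q hq hqp e he hlow
end

section
/- Let (X_i)_{i∈I} be a finite family of real Banach spaces and let (I_j)_{j∈J} be a partition of I. Suppose that for each j ∈ J the family (X_i)_{i∈I_j} is splitting for unconditional bases, and that the family (∏_{i∈I_j} X_i)_{j∈J} is splitting for unconditional bases. Then the family (X_i)_{i∈I} is splitting for unconditional bases. -/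
open scoped BigOperators

/-!
After reindexing along the partition, the family is indexed by a sigma type `Σ j, κ j`. Given
an unconditional basis `w` of `∏ p, X p`, splitting of `(∏ k, X j k)_j` yields a partition
`(N j)_j` of `ℕ` with `[w n | n ∈ N j] ≅ ∏ k, X j k`. If `N j` is infinite, `(w n)_{n ∈ N j}` is
an unconditional basis of its closed span, since the coordinate functionals of an unconditional
basis of a Banach space are continuous (open mapping theorem for the Banach space of bounded
families of partial sums); transported to `∏ k, X j k` it is split further by the splitting of
`(X j k)_k`. If `N j` is finite, everything is finite-dimensional and `N j` is divided by
counting dimensions.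
-/

namespace IsUncondBasis

variable {X : Type*} [NormedAddCommGroup X] [NormedSpace ℝ X] {e : ℕ → X}

noncomputable def coeffs (he : IsUncondBasis e) : X →ₗ[ℝ] ℕ → ℝ where
  toFun x := (he.2 x).choose
  map_add' x y := ((he.2 (x + y)).choose_spec.2 _ <| by
    simpa only [Pi.add_apply, add_smul] using
      (he.2 x).choose_spec.1.add (he.2 y).choose_spec.1).symm
  map_smul' c x := ((he.2 (c • x)).choose_spec.2 _ <| by
    simpa only [Pi.smul_apply, smul_eq_mul, mul_smul, RingHom.id_apply] using
      (he.2 x).choose_spec.1.const_smul c).symm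

theorem hasSum_coeffs (he : IsUncondBasis e) (x : X) : HasSum (fun n => he.coeffs x n • e n) x :=
  (he.2 x).choose_spec.1

theorem coeffs_eq_of_hasSum (he : IsUncondBasis e) {x : X} {a : ℕ → ℝ}
    (ha : HasSum (fun n => a n • e n) x) : he.coeffs x = a :=
  ((he.2 x).choose_spec.2 a ha).symm

theorem coeffs_self (he : IsUncondBasis e) (n : ℕ) : he.coeffs (e n) = Pi.single n 1 := by
  classical
  refine he.coeffs_eq_of_hasSum ?_
  convert hasSum_ite_eq n (e n) using 2 with m
  by_cases hm : m = n <;> simp [hm]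

theorem linearIndependent (he : IsUncondBasis e) : LinearIndependent ℝ e := by
  classical
  refine LinearIndependent.of_comp he.coeffs ?_
  simpa only [Function.comp_def, he.coeffs_self] using Pi.linearIndependent_single_one ℕ ℝ

theorem map (he : IsUncondBasis e) {Y : Type*} [NormedAddCommGroup Y] [NormedSpace ℝ Y]
    (T : X ≃L[ℝ] Y) : IsUncondBasis (T ∘ e) := by
  refine ⟨fun n hn => he.1 n (T.map_eq_zero_iff.1 hn), fun y => ?_⟩
  simpa only [Function.comp_apply, ← map_smul, ← T.hasSum', T.apply_symm_apply] using
    he.2 (T.symm y)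

end IsUncondBasis

theorem Summable.bddAbove_range_norm_sum {ι E : Type*} [SeminormedAddCommGroup E] {f : ι → E}
    (hf : Summable f) : BddAbove (Set.range fun s : Finset ι => ‖∑ i ∈ s, f i‖) := by
  classical
  obtain ⟨s, hs⟩ := cauchySeq_finset_iff_vanishing_norm.1 hf.hasSum.cauchySeq 1 one_pos
  refine ⟨1 + ∑ i ∈ s, ‖f i‖, ?_⟩
  rintro _ ⟨u, rfl⟩
  show ‖∑ i ∈ u, f i‖ ≤ _
  rw [← Finset.sum_filter_not_add_sum_filter u (· ∈ s)]
  have hout : ‖∑ i ∈ u.filter (· ∉ s), f i‖ < 1 :=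
    hs _ (Finset.disjoint_left.2 fun i hi => (Finset.mem_filter.1 hi).2)
  have hin : ‖∑ i ∈ u.filter (· ∈ s), f i‖ ≤ ∑ i ∈ s, ‖f i‖ :=
    (norm_sum_le _ _).trans <| Finset.sum_le_sum_of_subset_of_nonneg
      (fun i hi => (Finset.mem_filter.1 hi).2) fun _ _ _ => norm_nonneg _
  linarith [norm_add_le (∑ i ∈ u.filter (· ∉ s), f i) (∑ i ∈ u.filter (· ∈ s), f i)]

open scoped ENNReal

section PartialSums

variable {X : Type*} [NormedAddCommGroup X] [NormedSpace ℝ X]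

/-- For an unconditional basis `e` of a Banach space `X`, summation maps this Banach space
isomorphically onto `X`; its inverse bounds the coordinate functionals. -/
noncomputable def partialSums (e : ℕ → X) :
    Submodule ℝ (lp (fun _ : Finset ℕ => X) ∞) where
  carrier := {g | (∀ F, g F = ∑ n ∈ F, g {n}) ∧ (∀ n, g {n} ∈ ℝ ∙ e n) ∧
    Summable fun n => g {n}}
  add_mem' {g g'} hg hg' :=
    ⟨fun F => by
      simp only [lp.coeFn_add, Pi.add_apply, hg.1 F, hg'.1 F, Finset.sum_add_distrib],
      fun n => Submodule.add_mem _ (hg.2.1 n) (hg'.2.1 n), hg.2.2.add hg'.2.2⟩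
  zero_mem' := ⟨fun F => by simp, fun n => by simp, by simp⟩
  smul_mem' c g hg :=
    ⟨fun F => by simp only [lp.coeFn_smul, Pi.smul_apply, hg.1 F, Finset.smul_sum],
      fun n => Submodule.smul_mem _ c (hg.2.1 n), hg.2.2.const_smul c⟩

theorem isClosed_partialSums [CompleteSpace X] (e : ℕ → X) :
    IsClosed (partialSums e : Set (lp (fun _ : Finset ℕ => X) ∞)) := by
  have hA : IsClosed {g : lp (fun _ : Finset ℕ => X) ∞ |
      (∀ F, g F = ∑ n ∈ F, g {n}) ∧ ∀ n, g {n} ∈ ℝ ∙ e n} := by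
    have hev (F : Finset ℕ) : Continuous fun g : lp (fun _ : Finset ℕ => X) ∞ => g F :=
      (lp.evalCLM ℝ (fun _ : Finset ℕ => X) ∞ F).continuous
    simp only [Set.ofPred_and, Set.ofPred_forall]
    exact (isClosed_iInter fun F =>
      isClosed_eq (hev F) (continuous_finsetSum _ fun n _ => hev _)).inter
      (isClosed_iInter fun n => (Submodule.closed_of_finiteDimensional _).preimage (hev _))
  refine isClosed_of_closure_subset fun g hg => ?_
  obtain ⟨hsum, hmem⟩ := closure_minimal (fun _ hg => And.intro hg.1 hg.2.1) hA hg
  refine ⟨hsum, hmem, summable_iff_vanishing_norm.2 fun ε hε => ?_⟩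
  obtain ⟨g', hg', hgg'⟩ := Metric.mem_closure_iff.1 hg (ε / 2) (half_pos hε)
  obtain ⟨s, hs⟩ := summable_iff_vanishing_norm.1 hg'.2.2 (ε / 2) (half_pos hε)
  refine ⟨s, fun t ht => ?_⟩
  calc ‖∑ n ∈ t, g {n}‖ = ‖(g - g') t + ∑ n ∈ t, g' {n}‖ := by
        rw [← hsum, ← hg'.1]; simp
    _ ≤ ‖g - g'‖ + ‖∑ n ∈ t, g' {n}‖ :=
        norm_add_le_of_le (lp.norm_apply_le_norm ENNReal.top_ne_zero _ _) le_rfl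
    _ < ε := by linarith [hs t ht, dist_eq_norm g g']

noncomputable def partialSumsLimit (e : ℕ → X) : partialSums e →L[ℝ] X :=
  LinearMap.mkContinuous
    { toFun := fun g => ∑' n, (g : lp (fun _ : Finset ℕ => X) ∞) {n}
      map_add' := fun g g' => g.2.2.2.tsum_add g'.2.2.2
      map_smul' := fun c g => g.2.2.2.tsum_const_smul c }
    1 fun g => by
      rw [one_mul]
      refine le_of_tendsto' g.2.2.2.hasSum.norm fun F => ?_
      rw [← g.2.1 F]
      exact lp.norm_apply_le_norm ENNReal.top_ne_zero _ _

theorem hasSum_partialSumsLimit {e : ℕ → X} (g : partialSums e) :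
    HasSum (fun n => (g : lp (fun _ : Finset ℕ => X) ∞) {n}) (partialSumsLimit e g) :=
  g.2.2.2.hasSum

namespace IsUncondBasis

variable {e : ℕ → X}

noncomputable def partialSumsOf (he : IsUncondBasis e) (x : X) : partialSums e :=
  ⟨⟨fun F => ∑ n ∈ F, he.coeffs x n • e n,
      memℓp_infty (he.hasSum_coeffs x).summable.bddAbove_range_norm_sum⟩,
    fun F => by simp, fun n => by simp [Submodule.mem_span_singleton],
    by simpa using (he.hasSum_coeffs x).summable⟩

theorem coe_partialSumsOf (he : IsUncondBasis e) (x : X) (F : Finset ℕ) :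
    (he.partialSumsOf x : lp (fun _ : Finset ℕ => X) ∞) F =
      ∑ n ∈ F, he.coeffs x n • e n :=
  rfl

theorem partialSumsLimit_partialSumsOf (he : IsUncondBasis e) (x : X) :
    partialSumsLimit e (he.partialSumsOf x) = x := by
  refine (hasSum_partialSumsLimit _).unique ?_
  simpa only [coe_partialSumsOf, Finset.sum_singleton] using he.hasSum_coeffs x

theorem partialSumsLimit_injective (he : IsUncondBasis e) :
    Function.Injective (partialSumsLimit e) := by
  refine (injective_iff_map_eq_zero _).2 fun g hg => ?_
  obtain ⟨hsum, hmem, -⟩ := g.2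
  choose c hc using fun n => Submodule.mem_span_singleton.1 (hmem n)
  have hc0 : c = 0 := by
    refine (he.coeffs_eq_of_hasSum ?_).symm.trans (map_zero he.coeffs)
    simpa only [hc, ← hg] using hasSum_partialSumsLimit g
  refine Subtype.ext <| lp.ext <| funext fun F => ?_
  simp [hsum F, ← hc, hc0]

theorem continuous_coeffs_smul [CompleteSpace X] (he : IsUncondBasis e) (n : ℕ) :
    Continuous fun x => he.coeffs x n • e n := by
  have : CompleteSpace (partialSums e) := (isClosed_partialSums e).completeSpace_coe
  let Φ : partialSums e ≃L[ℝ] X := .ofBijective (partialSumsLimit e)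
    (LinearMap.ker_eq_bot.2 he.partialSumsLimit_injective)
    (LinearMap.range_eq_top.2 fun x => ⟨_, he.partialSumsLimit_partialSumsOf x⟩)
  have hΦ (x : X) : Φ.symm x = he.partialSumsOf x :=
    Φ.symm_apply_eq.2 (he.partialSumsLimit_partialSumsOf x).symm
  have := ((lp.evalCLM ℝ (fun _ : Finset ℕ => X) ∞ {n}).continuous.comp
    continuous_subtype_val).comp (Φ.symm.continuous.congr hΦ)
  exact this.congr fun x => Finset.sum_singleton (fun m => he.coeffs x m • e m) n

theorem coeffs_eq_zero_of_mem_closure_span [CompleteSpace X] (he : IsUncondBasis e)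
    {N : Set ℕ} {x : X} (hx : x ∈ (Submodule.span ℝ (e '' N)).topologicalClosure) {n : ℕ}
    (hn : n ∉ N) : he.coeffs x n = 0 := by
  have hker :
      Submodule.span ℝ (e '' N) ≤ LinearMap.ker (LinearMap.proj n ∘ₗ he.coeffs) := by
    refine Submodule.span_le.2 ?_
    rintro _ ⟨m, hm, rfl⟩
    simp [he.coeffs_self, (ne_of_mem_of_not_mem hm hn).symm]
  have hclosed : IsClosed {x | he.coeffs x n = 0} := by
    simpa only [smul_eq_zero, he.1 n, or_false] using
      isClosed_eq (g := fun _ => 0) (he.continuous_coeffs_smul n) continuous_const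
  rw [← SetLike.mem_coe, Submodule.topologicalClosure_coe] at hx
  exact closure_minimal (fun y hy => hker hy) hclosed hx

end IsUncondBasis

end PartialSums

section Subsequence

variable {X : Type*} [NormedAddCommGroup X] [NormedSpace ℝ X]

def subseqInClosedSpan (e : ℕ → X) (k : ℕ → ℕ) :
    ℕ → (Submodule.span ℝ (e '' Set.range k)).topologicalClosure := fun n =>
  ⟨e (k n), Submodule.le_topologicalClosure _ <|
    Submodule.subset_span (Set.mem_image_of_mem e (Set.mem_range_self n))⟩

theorem IsUncondBasis.subseqInClosedSpan [CompleteSpace X] {e : ℕ → X} (he : IsUncondBasis e)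
    {k : ℕ → ℕ} (hk : Function.Injective k) :
    IsUncondBasis (_root_.subseqInClosedSpan e k) := by
  refine ⟨fun n hn => he.1 (k n) (congrArg Subtype.val hn), fun y => ?_⟩
  have hcoe (a : ℕ → ℝ) : HasSum (fun n => a n • _root_.subseqInClosedSpan e k n) y ↔
      HasSum (fun n => a n • e (k n)) (y : X) :=
    (Topology.IsInducing.subtypeVal.hasSum_iff (g := Submodule.subtype _) _ _).symm
  refine ⟨fun n => he.coeffs y (k n), (hcoe _).2 ?_, fun b hb => ?_⟩
  · refine (hk.hasSum_iff fun m hm => ?_).2 (he.hasSum_coeffs y)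
    rw [he.coeffs_eq_zero_of_mem_closure_span y.2 hm, zero_smul]
  · have hext : HasSum (fun m => Function.extend k b 0 m • e m) (y : X) := by
      refine (hk.hasSum_iff fun m hm => ?_).1 ?_
      · rw [Function.extend_apply' _ _ _ hm, Pi.zero_apply, zero_smul]
      · simpa only [Function.comp_def, hk.extend_apply] using (hcoe b).1 hb
    funext n
    rw [he.coeffs_eq_of_hasSum hext, hk.extend_apply]

end Subsequence

section ClosedSpan

variable {E F : Type*} [NormedAddCommGroup E] [NormedSpace ℝ E]
  [NormedAddCommGroup F] [NormedSpace ℝ F]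

theorem Submodule.map_topologicalClosure_span {L : E →L[ℝ] F}
    (hL : Topology.IsClosedEmbedding L) (s : Set E) :
    (Submodule.span ℝ s).topologicalClosure.map (L : E →ₗ[ℝ] F) =
      (Submodule.span ℝ (L '' s)).topologicalClosure := by
  refine SetLike.coe_injective ?_
  rw [Submodule.map_coe, Submodule.topologicalClosure_coe, Submodule.topologicalClosure_coe,
    ContinuousLinearMap.coe_coe, ← hL.closure_image_eq, ← ContinuousLinearMap.coe_coe,
    ← Submodule.map_coe, Submodule.map_span]

noncomputable def ContinuousLinearEquiv.closedSpanMap (T : E ≃L[ℝ] F) (s : Set E) :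
    (Submodule.span ℝ s).topologicalClosure ≃L[ℝ]
      (Submodule.span ℝ (T '' s)).topologicalClosure :=
  T.ofSubmodules _ _
    (Submodule.map_topologicalClosure_span (L := (T : E →L[ℝ] F))
      T.toHomeomorph.isClosedEmbedding s)

noncomputable def Submodule.closedSpanSubtype (Y : Submodule ℝ E) (hY : IsClosed (Y : Set E))
    (s : Set Y) :
    (Submodule.span ℝ s).topologicalClosure ≃L[ℝ]
      (Submodule.span ℝ (Subtype.val '' s)).topologicalClosure :=
  (LinearIsometryEquiv.ofSurjective (Y.subtypeₗᵢ.submoduleMap _)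
      (LinearMap.submoduleMap_surjective _ _)).toContinuousLinearEquiv.trans
    (.ofEq _ _ (Submodule.map_topologicalClosure_span (L := Y.subtypeL)
      hY.isClosedEmbedding_subtypeVal s))

end ClosedSpan

theorem Set.Finite.exists_pairwiseDisjoint_ncard_eq {α κ : Type*} [Fintype κ] {N : Set α}
    (hN : N.Finite) (d : κ → ℕ) (hd : ∑ i, d i = N.ncard) :
    ∃ S : κ → Set α, Pairwise (Function.onFun Disjoint S) ∧ ⋃ i, S i = N ∧
      ∀ i, (S i).ncard = d i := by
  have := hN.fintype
  let σ : (Σ i, Fin (d i)) ≃ N :=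
    Fintype.equivOfCardEq <| by
      simp only [Fintype.card_sigma, Fintype.card_fin, hd, Set.ncard_eq_toFinset_card',
        Set.toFinset_card]
  have hσ : Function.Injective fun p => (σ p : α) := Subtype.val_injective.comp σ.injective
  refine ⟨fun i => Set.range fun t => (σ ⟨i, t⟩ : α), fun i j hij => ?_, ?_, fun i => ?_⟩
  · exact Set.disjoint_range_iff.2 fun t t' h => hij (congrArg Sigma.fst (hσ h))
  · dsimp only
    rw [← Set.range_sigma_eq_iUnion_range fun p => (σ p : α), Set.range_comp' Subtype.val σ,
      σ.range_eq_univ, Set.image_univ, Subtype.range_coe]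
  · exact (Set.ncard_range_of_injective (hσ.comp sigma_mk_injective)).trans (Nat.card_fin _)

theorem LinearIndependent.finrank_span_image {ι V : Type*} [AddCommGroup V] [Module ℝ V]
    {w : ι → V} (hw : LinearIndependent ℝ w) {s : Set ι} (hs : s.Finite) :
    Module.finrank ℝ (Submodule.span ℝ (w '' s)) = s.ncard := by
  have := hs.fintype
  rw [Set.image_eq_range, Set.ncard_eq_toFinset_card', Set.toFinset_card]
  exact finrank_span_eq_card (hw.comp _ Subtype.val_injective)

section Splitting

variable {κ : Type*} {W : κ → Type*} [∀ i, NormedAddCommGroup (W i)]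
  [∀ i, NormedSpace ℝ (W i)]
  {Z : Type*} [NormedAddCommGroup Z] [NormedSpace ℝ Z]

def SplitsAs (w : ℕ → Z) (N : Set ℕ) (W : κ → Type*) [∀ i, NormedAddCommGroup (W i)]
    [∀ i, NormedSpace ℝ (W i)] : Prop :=
  ∃ S : κ → Set ℕ, Pairwise (Function.onFun Disjoint S) ∧ (⋃ i, S i) = N ∧
    ∀ i, Nonempty ((Submodule.span ℝ (w '' S i)).topologicalClosure ≃L[ℝ] W i)

theorem splitsAs_of_finite [Fintype κ] {w : ℕ → Z} (hw : LinearIndependent ℝ w) {N : Set ℕ}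
    (hN : N.Finite) (T : (Submodule.span ℝ (w '' N)).topologicalClosure ≃L[ℝ] ∀ i, W i) :
    SplitsAs w N W := by
  have hdim (s : Set ℕ) (hs : s.Finite) :
      FiniteDimensional ℝ (Submodule.span ℝ (w '' s)).topologicalClosure ∧
        Module.finrank ℝ (Submodule.span ℝ (w '' s)).topologicalClosure = s.ncard := by
    have := FiniteDimensional.span_of_finite ℝ (hs.image w)
    rw [(Submodule.closed_of_finiteDimensional _).submodule_topologicalClosure_eq]
    exact ⟨this, hw.finrank_span_image hs⟩
  have := (hdim N hN).1
  have := T.toLinearEquiv.finiteDimensional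
  have (i : κ) : FiniteDimensional ℝ (W i) :=
    Module.Finite.of_surjective (LinearMap.proj i) (Function.surjective_eval i)
  obtain ⟨S, hdisj, hcov, hcard⟩ := hN.exists_pairwiseDisjoint_ncard_eq
    (fun i => Module.finrank ℝ (W i))
    (by rw [← Module.finrank_pi_fintype, ← T.toLinearEquiv.finrank_eq, (hdim N hN).2])
  refine ⟨S, hdisj, hcov, fun i => ?_⟩
  obtain ⟨_, hrank⟩ := hdim (S i) (hN.subset (hcov ▸ Set.subset_iUnion S i))
  exact FiniteDimensional.nonempty_continuousLinearEquiv_of_finrank_eq (hrank.trans (hcard i))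

theorem SplittingFamily.splitsAs_of_infinite [Fintype κ] (hW : SplittingFamily W)
    [CompleteSpace Z] {w : ℕ → Z} (hw : IsUncondBasis w) {N : Set ℕ} (hN : N.Infinite)
    (T : (Submodule.span ℝ (w '' N)).topologicalClosure ≃L[ℝ] ∀ i, W i) :
    SplitsAs w N W := by
  obtain ⟨k, hk, rfl⟩ : ∃ k : ℕ → ℕ, Function.Injective k ∧ Set.range k = N :=
    ⟨Nat.nth (· ∈ N), Nat.nth_injective hN, Nat.range_nth_of_infinite hN⟩
  obtain ⟨M, hMdisj, hMcov, hMiso⟩ :=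
    hW (T ∘ subseqInClosedSpan w k) ((hw.subseqInClosedSpan hk).map T)
  refine ⟨fun i => k '' M i, fun i i' h => (Set.disjoint_image_iff hk).2 (hMdisj h),
    by rw [← Set.image_iUnion, hMcov, Set.image_univ], fun i => ?_⟩
  obtain ⟨Ti⟩ := hMiso i
  have hval : Subtype.val '' (subseqInClosedSpan w k '' M i) = w '' (k '' M i) := by
    simp only [Set.image_image, subseqInClosedSpan]
  exact ⟨(ContinuousLinearEquiv.ofEq _ _ (by rw [hval])).trans <|
    (Submodule.closedSpanSubtype _ (Submodule.isClosed_topologicalClosure _) _).symm.trans <|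
    (T.closedSpanMap _).trans <|
    (ContinuousLinearEquiv.ofEq _ _ (by rw [Set.image_comp])).trans Ti⟩

theorem SplittingFamily.splitsAs [Fintype κ] (hW : SplittingFamily W) [CompleteSpace Z]
    {w : ℕ → Z} (hw : IsUncondBasis w) {N : Set ℕ}
    (T : (Submodule.span ℝ (w '' N)).topologicalClosure ≃L[ℝ] ∀ i, W i) : SplitsAs w N W :=
  N.finite_or_infinite.elim (fun hN => splitsAs_of_finite hw.linearIndependent hN T)
    (fun hN => hW.splitsAs_of_infinite hw hN T)

end Splitting

def ContinuousLinearEquiv.piCurry (R : Type*) [Semiring R] {J : Type*} {κ : J → Type*}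
    (X : ∀ j, κ j → Type*) [∀ j k, AddCommMonoid (X j k)] [∀ j k, Module R (X j k)]
    [∀ j k, TopologicalSpace (X j k)] :
    (∀ p : Σ j, κ j, X p.1 p.2) ≃L[R] ∀ j k, X j k where
  __ := LinearEquiv.piCurry R X
  continuous_toFun := continuous_pi fun _ => continuous_pi fun _ => continuous_apply _
  continuous_invFun := continuous_pi fun p => (continuous_apply p.2).comp (continuous_apply p.1)

namespace SplittingFamily

theorem sigma {J : Type*} [Fintype J] {κ : J → Type*} [∀ j, Fintype (κ j)]
    (X : ∀ j, κ j → Type*) [∀ j k, NormedAddCommGroup (X j k)]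
    [∀ j k, NormedSpace ℝ (X j k)]
    [∀ j k, CompleteSpace (X j k)] (h1 : ∀ j, SplittingFamily (X j))
    (h2 : SplittingFamily fun j => ∀ k, X j k) :
    SplittingFamily fun p : Σ j, κ j => X p.1 p.2 := by
  intro w hw
  let V := ContinuousLinearEquiv.piCurry ℝ X
  obtain ⟨N, hNdisj, hNcov, hNiso⟩ := h2 (V ∘ w) (hw.map V)
  choose S hSdisj hScov hSiso using fun j => (h1 j).splitsAs hw <| (V.closedSpanMap _).trans <|
    (ContinuousLinearEquiv.ofEq _ _ (by rw [Set.image_comp])).trans (hNiso j).some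
  refine ⟨fun p => S p.1 p.2, ?_, ?_, fun p => hSiso p.1 p.2⟩
  · rintro ⟨j, k⟩ ⟨j', k'⟩ hne
    by_cases hj : j = j'
    · subst hj
      exact hSdisj j fun hk => hne (congrArg (Sigma.mk j) hk)
    · exact (hNdisj hj).mono (hScov j ▸ Set.subset_iUnion _ k)
        (hScov j' ▸ Set.subset_iUnion _ k')
  · rw [Set.iUnion_sigma]
    simp_rw [hScov]
    exact hNcov

theorem of_equiv {ι ι' : Type*} [Fintype ι] [Fintype ι'] {X : ι → Type*}
    [∀ i, NormedAddCommGroup (X i)] [∀ i, NormedSpace ℝ (X i)] (e : ι' ≃ ι)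
    (h : SplittingFamily fun i' => X (e i')) : SplittingFamily X := by
  intro w hw
  let V := ContinuousLinearEquiv.piCongrLeft ℝ X e
  obtain ⟨N, hNdisj, hNcov, hNiso⟩ := h (V.symm ∘ w) (hw.map V.symm)
  refine ⟨fun i => N (e.symm i), fun i i' h => hNdisj (e.symm.injective.ne h),
    by rw [e.symm.surjective.iUnion_comp N, hNcov], fun i => ?_⟩
  have hi : Nonempty (_ ≃L[ℝ] X (e (e.symm i))) := hNiso (e.symm i)
  rw [e.apply_symm_apply] at hi
  obtain ⟨T⟩ := hi
  exact ⟨(V.symm.closedSpanMap _).trans <|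
    (ContinuousLinearEquiv.ofEq _ _ (by rw [Set.image_comp])).trans T⟩

end SplittingFamily

noncomputable def Finset.sigmaEquivOfPartition {ι J : Type*} (I : J → Finset ι)
    (hdisj : Pairwise (Function.onFun Disjoint I)) (hcover : ∀ i, ∃ j, i ∈ I j) :
    (Σ j, I j) ≃ ι where
  toFun p := p.2
  invFun i := ⟨(hcover i).choose, i, (hcover i).choose_spec⟩
  left_inv := fun ⟨_, i, hi⟩ => Sigma.subtype_ext
    (of_not_not fun h => Finset.disjoint_left.1 (hdisj h) (hcover i).choose_spec hi) rfl
  right_inv _ := rfl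

theorem statement17 {ι J : Type*} [Fintype ι] [Fintype J]
    (X : ι → Type*) [∀ i, NormedAddCommGroup (X i)] [∀ i, NormedSpace ℝ (X i)]
    [∀ i, CompleteSpace (X i)]
    (Ipart : J → Finset ι)
    (hdisj : Pairwise (Function.onFun Disjoint Ipart))
    (hcover : ∀ i, ∃ j, i ∈ Ipart j)
    (h1 : ∀ j, SplittingFamily (fun i : Ipart j => X i.1))
    (h2 : SplittingFamily (fun j : J => ∀ i : Ipart j, X i.1)) :
    SplittingFamily X :=
  .of_equiv (Finset.sigmaEquivOfPartition Ipart hdisj hcover)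
    (.sigma (fun j (i : Ipart j) => X i) h1 h2)
end
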